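/- (Lemma 1) With the domain setup below, suppose a and K are positive real numbers with a < min{1/6, 1/(6K)}, and U ∈ B^K_a. Then there exists a holomorphic function g : D_a → ℂ such that |g(t,x)| ≤ 6K for all (t,x) ∈ D_a, and U(t,x)·(−2/t + g(t,x)) = 1 for every (t,x) ∈ D_a with t ≠ 0 (in particular U(t,x) ≠ 0 for all (t,x) ∈ D_a with t ≠ 0). -/

import Mathlib

open Complex Set Filter Topology

/-- The neighbourhood `𝒪_s := {x : dist(x, 𝒪₀) < s·d}` (equal to `𝒪₀` when `s = 0`). -/
def Oset (O₀ : Set ℂ) (d s : ℝ) : Set ℂ :=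
  {x : ℂ | x ∈ O₀ ∨ Metric.infDist x O₀ < s * d}

/-- The domain `D_a := {(t,x) : ∃ s ∈ [0,1], |t| < a(1−s) ∧ x ∈ 𝒪_s}`. -/
def Dset (O₀ : Set ℂ) (d a : ℝ) : Set (ℂ × ℂ) :=
  {p : ℂ × ℂ | ∃ s ∈ Set.Icc (0 : ℝ) 1,
    ‖p.1‖ < a * (1 - s) ∧ p.2 ∈ Oset O₀ d s}

/-- `U ∈ B^K_a` : `U` is holomorphic on `D_a` and `U + t/2 ∈ O²_K(D_a)`. -/
def memB (O₀ : Set ℂ) (d a K : ℝ) (U : ℂ → ℂ → ℂ) : Prop :=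
  DifferentiableOn ℂ (fun p : ℂ × ℂ => U p.1 p.2) (Dset O₀ d a) ∧
  ∀ p ∈ Dset O₀ d a, ‖U p.1 p.2 + p.1 / 2‖ ≤ K * ‖p.1‖ ^ 2


section Aux
open Metric

noncomputable def Qext (E : ℂ → ℂ → ℂ) (t x : ℂ) : ℂ :=
  if t = 0 then limUnder (𝓝[≠] (0:ℂ)) (fun s => E s x / s ^ 2) else E t x / t ^ 2


theorem Qext_slice {S : Set (ℂ × ℂ)} {E : ℂ → ℂ → ℂ}
    (hE : DifferentiableOn ℂ (fun p : ℂ × ℂ => E p.1 p.2) S) {K : ℝ}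
    (hb : ∀ p ∈ S, ‖E p.1 p.2‖ ≤ K * ‖p.1‖ ^ 2)
    {R : ℝ} (hR : 0 < R) {x : ℂ} (hsub : Metric.ball (0:ℂ) R ×ˢ {x} ⊆ S) :
    DifferentiableOn ℂ (fun t => Qext E t x) (Metric.ball (0:ℂ) R) ∧
      ∀ t ∈ Metric.ball (0:ℂ) R, ‖Qext E t x‖ ≤ K := by
  set h : ℂ → ℂ := fun s => E s x / s ^ 2 with hh
  have hEx : DifferentiableOn ℂ (fun t => E t x) (Metric.ball (0:ℂ) R) := by
    have : DifferentiableOn ℂ ((fun p : ℂ × ℂ => E p.1 p.2) ∘ (fun t => (t, x)))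
        (Metric.ball (0:ℂ) R) :=
      hE.comp ((differentiable_id.prodMk (differentiable_const x)).differentiableOn)
        (fun t ht => hsub ⟨ht, rfl⟩)
    exact this
  have hdh : DifferentiableOn ℂ h (Metric.ball (0:ℂ) R \ {0}) := by
    apply DifferentiableOn.div (hEx.mono diff_subset)
    · exact (differentiable_pow 2).differentiableOn
    · intro t ht
      exact pow_ne_zero 2 ht.2
  have hbh : ∀ t ∈ Metric.ball (0:ℂ) R \ {0}, ‖h t‖ ≤ K := by
    intro t ht
    have h1 : ‖E t x‖ ≤ K * ‖t‖ ^ 2 := hb (t, x) (hsub ⟨ht.1, rfl⟩)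
    have ht0 : (t:ℂ) ≠ 0 := ht.2
    have ht2 : ‖t ^ 2‖ ≠ 0 := by
      simpa using pow_ne_zero 2 ht0
    rw [hh]
    simp only [norm_div]
    rw [div_le_iff₀ (lt_of_le_of_ne (norm_nonneg _) (Ne.symm ht2))]
    calc ‖E t x‖ ≤ K * ‖t‖ ^ 2 := h1
      _ = K * ‖t ^ 2‖ := by rw [norm_pow]
  have hQeq : (fun t => Qext E t x) = Function.update h 0 (limUnder (𝓝[≠] (0:ℂ)) h) := by
    funext t
    simp [Qext, Function.update_apply, hh]
  have hdiff : DifferentiableOn ℂ (fun t => Qext E t x) (Metric.ball (0:ℂ) R) := by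
    rw [hQeq]
    apply Complex.differentiableOn_update_limUnder_of_bddAbove
      (Metric.isOpen_ball.mem_nhds (Metric.mem_ball_self hR)) hdh
    refine ⟨K, ?_⟩
    rintro y ⟨t, ht, rfl⟩
    exact hbh t ht
  refine ⟨hdiff, ?_⟩
  intro t ht
  rcases eq_or_ne t 0 with rfl | ht0
  · have hc : ContinuousAt (fun t => Qext E t x) 0 :=
      (hdiff.differentiableAt (Metric.isOpen_ball.mem_nhds ht)).continuousAt
    have hc' : Filter.Tendsto h (𝓝[≠] (0:ℂ)) (𝓝 (Qext E 0 x)) := by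
      rw [hQeq] at hc
      have := continuousAt_update_same.mp hc
      convert this using 2
      simp [Qext, hh]
    refine le_of_tendsto (hc'.norm) ?_
    have hmem : Metric.ball (0:ℂ) R \ {0} ∈ 𝓝[≠] (0:ℂ) :=
      diff_mem_nhdsWithin_compl (Metric.isOpen_ball.mem_nhds (Metric.mem_ball_self hR)) _
    filter_upwards [hmem] with s hs using hbh s hs
  · have : Qext E t x = h t := by simp [Qext, ht0, hh]
    rw [this]
    exact hbh t ⟨ht, ht0⟩

theorem Qext_main {S : Set (ℂ × ℂ)} (hS : IsOpen S) {E : ℂ → ℂ → ℂ}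
    (hE : DifferentiableOn ℂ (fun p : ℂ × ℂ => E p.1 p.2) S) {K : ℝ} (hK : 0 ≤ K)
    (hb : ∀ p ∈ S, ‖E p.1 p.2‖ ≤ K * ‖p.1‖ ^ 2) :
    DifferentiableOn ℂ (fun p : ℂ × ℂ => Qext E p.1 p.2) S ∧
      (∀ p ∈ S, ‖Qext E p.1 p.2‖ ≤ K) ∧
      (∀ p ∈ S, E p.1 p.2 = p.1 ^ 2 * Qext E p.1 p.2) := by
  -- a product ball around each point of S
  have hball : ∀ p ∈ S, ∃ R > (0:ℝ), Metric.ball p.1 R ×ˢ Metric.ball p.2 R ⊆ S := by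
    intro p hp
    obtain ⟨ε, hε, hεS⟩ := Metric.isOpen_iff.mp hS p hp
    refine ⟨ε, hε, ?_⟩
    rintro ⟨q1, q2⟩ ⟨hq1, hq2⟩
    exact hεS (Metric.mem_ball.mpr (by rw [Prod.dist_eq]; exact max_lt hq1 hq2))
  -- the bound
  have hbound : ∀ p ∈ S, ‖Qext E p.1 p.2‖ ≤ K := by
    rintro ⟨t, x⟩ hp
    rcases eq_or_ne t 0 with rfl | ht0
    · obtain ⟨R, hR, hsub⟩ := hball _ hp
      have hsl : Metric.ball (0:ℂ) R ×ˢ {x} ⊆ S := by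
        rintro ⟨s, y⟩ ⟨hs, rfl⟩
        exact hsub ⟨hs, Metric.mem_ball_self hR⟩
      exact (Qext_slice hE hb hR hsl).2 0 (Metric.mem_ball_self hR)
    · have : Qext E t x = E t x / t ^ 2 := by simp [Qext, ht0]
      rw [this, norm_div, norm_pow]
      rw [div_le_iff₀ (by simpa using pow_pos (norm_pos_iff.mpr ht0) 2)]
      exact hb (t, x) hp
  -- the factorization
  have hfact : ∀ p ∈ S, E p.1 p.2 = p.1 ^ 2 * Qext E p.1 p.2 := by
    rintro ⟨t, x⟩ hp
    rcases eq_or_ne t 0 with rfl | ht0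
    · have h0 : ‖E 0 x‖ ≤ 0 := by simpa using hb (0, x) hp
      have : E 0 x = 0 := by
        simpa using le_antisymm h0 (norm_nonneg _)
      simp [this]
    · have : Qext E t x = E t x / t ^ 2 := by simp [Qext, ht0]
      rw [this]
      field_simp
  refine ⟨?_, hbound, hfact⟩
  -- differentiability
  rintro ⟨t₀, x₁⟩ hp
  rcases eq_or_ne t₀ 0 with rfl | ht0
  swap
  · -- easy case: away from t = 0
    refine DifferentiableAt.differentiableWithinAt ?_
    have hfst : DifferentiableAt ℂ (fun p : ℂ × ℂ => p.1 ^ 2) (t₀, x₁) := by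
      exact DifferentiableAt.pow differentiableAt_fst 2
    have hG : DifferentiableAt ℂ (fun p : ℂ × ℂ => E p.1 p.2 * (p.1 ^ 2)⁻¹) (t₀, x₁) := by
      exact DifferentiableAt.mul (hE.differentiableAt (hS.mem_nhds hp))
        (hfst.inv (pow_ne_zero 2 ht0))
    refine hG.congr_of_eventuallyEq ?_
    have hmem : {p : ℂ × ℂ | p.1 ≠ 0} ∈ 𝓝 (t₀, x₁) :=
      (isOpen_compl_singleton.preimage continuous_fst).mem_nhds ht0
    filter_upwards [hmem] with p hp1
    simp [Qext, hp1, div_eq_mul_inv]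
  -- hard case: t₀ = 0
  obtain ⟨R, hR, hsub⟩ := hball _ hp
  set r : ℝ := R / 2 with hr_def
  have hr : 0 < r := by positivity
  have hrR : r < R := by simp [hr_def]; linarith
  -- slices
  have hxsl : ∀ x ∈ Metric.closedBall x₁ r, Metric.ball (0:ℂ) R ×ˢ {x} ⊆ S := by
    intro x hx
    rintro ⟨s, y⟩ ⟨hs, rfl⟩
    exact hsub ⟨hs, lt_of_le_of_lt hx hrR⟩
  set f : ℂ → ℂ → ℂ := fun x t => Qext E t x with hf_def
  have hfd : ∀ x ∈ Metric.closedBall x₁ r, DifferentiableOn ℂ (f x) (Metric.ball (0:ℂ) R) :=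
    fun x hx => (Qext_slice hE hb hR (hxsl x hx)).1
  have hfb : ∀ x ∈ Metric.closedBall x₁ r, ∀ t ∈ Metric.ball (0:ℂ) R, ‖f x t‖ ≤ K :=
    fun x hx => (Qext_slice hE hb hR (hxsl x hx)).2
  set C₁ : ℝ := (2 * K + 1) / R with hC₁_def
  have hC₁ : 0 < C₁ := by positivity
  -- first Schwarz bound
  have hds1 : ∀ x ∈ Metric.closedBall x₁ r, ∀ t ∈ Metric.ball (0:ℂ) R,
      ‖dslope (f x) 0 t‖ ≤ C₁ := by
    intro x hx t ht
    refine Complex.norm_dslope_le_div_of_mapsTo_ball (hfd x hx) ?_ ht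
    intro s hs
    rw [Metric.mem_closedBall, dist_eq_norm]; refine le_of_lt ?_
    calc ‖f x s - f x 0‖ ≤ ‖f x s‖ + ‖f x 0‖ := norm_sub_le _ _
      _ ≤ K + K := add_le_add (hfb x hx s hs) (hfb x hx 0 (Metric.mem_ball_self hR))
      _ < 2 * K + 1 := by linarith
  -- dslope is differentiable
  have hgd : ∀ x ∈ Metric.closedBall x₁ r,
      DifferentiableOn ℂ (dslope (f x) 0) (Metric.ball (0:ℂ) R) := by
    intro x hx
    exact (differentiableOn_dslope (Metric.isOpen_ball.mem_nhds (Metric.mem_ball_self hR))).mpr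
      (hfd x hx)
  set C₂ : ℝ := (2 * C₁ + 1) / R with hC₂_def
  have hC₂ : 0 < C₂ := by positivity
  -- second Schwarz bound, giving a uniform Lipschitz-type estimate
  have hlip : ∀ x ∈ Metric.closedBall x₁ r, ∀ t ∈ Metric.ball (0:ℂ) R,
      ‖dslope (f x) 0 t - deriv (f x) 0‖ ≤ C₂ * ‖t‖ := by
    intro x hx t ht
    have hds2 : ‖dslope (dslope (f x) 0) 0 t‖ ≤ C₂ := by
      refine Complex.norm_dslope_le_div_of_mapsTo_ball (hgd x hx) ?_ ht
      intro s hs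
      rw [Metric.mem_closedBall, dist_eq_norm]; refine le_of_lt ?_
      calc ‖dslope (f x) 0 s - dslope (f x) 0 0‖
          ≤ ‖dslope (f x) 0 s‖ + ‖dslope (f x) 0 0‖ := norm_sub_le _ _
        _ ≤ C₁ + C₁ := add_le_add (hds1 x hx s hs)
            (hds1 x hx 0 (Metric.mem_ball_self hR))
        _ < 2 * C₁ + 1 := by linarith
    rcases eq_or_ne t 0 with rfl | ht0
    · simp [dslope_same]
    · have h2 : dslope (dslope (f x) 0) 0 t = (dslope (f x) 0 t - deriv (f x) 0) / t := by
        rw [dslope_of_ne _ ht0, slope_def_field, dslope_same, sub_zero]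
      have : dslope (f x) 0 t - deriv (f x) 0 = t * dslope (dslope (f x) 0) 0 t := by
        rw [h2]; field_simp
      rw [this, norm_mul]
      rw [mul_comm]
      exact mul_le_mul_of_nonneg_right hds2 (norm_nonneg t)
  -- key identity
  have hkey : ∀ t x : ℂ, Qext E t x = Qext E 0 x + t * dslope (f x) 0 t := by
    intro t x
    rcases eq_or_ne t 0 with rfl | ht0
    · simp
    · rw [dslope_of_ne _ ht0, slope_def_field]
      field_simp [hf_def]
      show Qext E t x * (t - 0) = Qext E 0 x * (t - 0) + t * (Qext E t x - Qext E 0 x)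
      ring
  -- the approximating sequence
  set tseq : ℕ → ℝ := fun n => r / (n + 1) with htseq_def
  have htpos : ∀ n, 0 < tseq n := fun n => by positivity
  have htball : ∀ n, (tseq n : ℂ) ∈ Metric.ball (0:ℂ) R := by
    intro n
    rw [Metric.mem_ball, dist_zero_right, Complex.norm_real, Real.norm_eq_abs,
      abs_of_pos (htpos n)]
    calc r / (n + 1) ≤ r / 1 := by
          apply div_le_div_of_nonneg_left hr.le one_pos
          push_cast; linarith
      _ < R := by rw [div_one]; exact hrR
  have htne : ∀ n, (tseq n : ℂ) ≠ 0 := fun n => by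
    exact_mod_cast Complex.ofReal_ne_zero.mpr (htpos n).ne'
  have htlim : Tendsto (fun n : ℕ => tseq n) atTop (𝓝 0) := by
    rw [htseq_def]
    simpa using tendsto_const_nhds.div_atTop
      (tendsto_atTop_add_const_right atTop (1:ℝ) tendsto_natCast_atTop_atTop)
  -- Q0 is differentiable in x
  set Q0 : ℂ → ℂ := fun x => Qext E 0 x with hQ0_def
  set F : ℕ → ℂ → ℂ := fun n x => Qext E (tseq n) x with hF_def
  have hFd : ∀ n, DifferentiableOn ℂ (F n) (Metric.ball x₁ r) := by
    intro n
    have hEx : DifferentiableOn ℂ (fun x => E (tseq n) x) (Metric.ball x₁ r) := by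
      have : DifferentiableOn ℂ ((fun p : ℂ × ℂ => E p.1 p.2) ∘ (fun x => ((tseq n : ℂ), x)))
          (Metric.ball x₁ r) := by
        refine hE.comp ((differentiable_const _).prodMk differentiable_id).differentiableOn ?_
        intro x hx
        exact hsub ⟨htball n, lt_of_lt_of_le hx hrR.le⟩
      exact this
    have : F n = fun x => E (tseq n) x / (tseq n : ℂ) ^ 2 := by
      funext x; simp [hF_def, Qext, (htpos n).ne']
    rw [this]
    exact hEx.div_const _
  have hFun : TendstoUniformlyOn F Q0 atTop (Metric.ball x₁ r) := by
    rw [Metric.tendstoUniformlyOn_iff]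
    intro ε hε
    have hto : Tendsto (fun n : ℕ => C₁ * tseq n) atTop (𝓝 0) := by
      simpa using htlim.const_mul C₁
    filter_upwards [hto.eventually (gt_mem_nhds hε)] with n hn x hx
    rw [dist_eq_norm]
    have hxcb : x ∈ Metric.closedBall x₁ r := Metric.ball_subset_closedBall hx
    have : F n x - Q0 x = (tseq n : ℂ) * dslope (f x) 0 (tseq n) := by
      have := hkey (tseq n) x
      rw [hF_def, hQ0_def]
      simp only at this ⊢
      rw [this]; ring
    calc ‖Q0 x - F n x‖ = ‖F n x - Q0 x‖ := by rw [norm_sub_rev]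
      _ = ‖(tseq n : ℂ)‖ * ‖dslope (f x) 0 (tseq n)‖ := by rw [this, norm_mul]
      _ ≤ ‖(tseq n : ℂ)‖ * C₁ := by
          refine mul_le_mul_of_nonneg_left ?_ (norm_nonneg _)
          exact hds1 x hxcb _ (htball n)
      _ = C₁ * tseq n := by
          rw [Complex.norm_real, Real.norm_eq_abs, abs_of_pos (htpos n)]; ring
      _ < ε := hn
  have hQ0d : DifferentiableOn ℂ Q0 (Metric.ball x₁ r) :=
    hFun.tendstoLocallyUniformlyOn.differentiableOn (Eventually.of_forall hFd)
      Metric.isOpen_ball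
  -- D is continuous in x
  set D : ℂ → ℂ := fun x => deriv (f x) 0 with hD_def
  set G : ℕ → ℂ → ℂ := fun n x => ((tseq n : ℂ))⁻¹ * (F n x - Q0 x) with hG_def
  have hGd : ∀ n, DifferentiableOn ℂ (G n) (Metric.ball x₁ r) := by
    intro n
    exact ((hFd n).sub hQ0d).const_mul _
  have hGeq : ∀ n, ∀ x, G n x = dslope (f x) 0 (tseq n) := by
    intro n x
    have hk := hkey (tseq n) x
    show ((tseq n : ℂ))⁻¹ * (Qext E (tseq n) x - Qext E 0 x) = dslope (f x) 0 (tseq n)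
    rw [hk, add_sub_cancel_left, inv_mul_cancel_left₀ (htne n)]
  have hGun : TendstoUniformlyOn G D atTop (Metric.ball x₁ r) := by
    rw [Metric.tendstoUniformlyOn_iff]
    intro ε hε
    have hto : Tendsto (fun n : ℕ => C₂ * tseq n) atTop (𝓝 0) := by
      simpa using htlim.const_mul C₂
    filter_upwards [hto.eventually (gt_mem_nhds hε)] with n hn x hx
    rw [dist_eq_norm, hGeq n x]
    have hxcb : x ∈ Metric.closedBall x₁ r := Metric.ball_subset_closedBall hx
    calc ‖D x - dslope (f x) 0 (tseq n)‖
        = ‖dslope (f x) 0 (tseq n) - deriv (f x) 0‖ := by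
          rw [hD_def, norm_sub_rev]
      _ ≤ C₂ * ‖((tseq n : ℝ) : ℂ)‖ := hlip x hxcb _ (htball n)
      _ = C₂ * tseq n := by
          rw [Complex.norm_real, Real.norm_eq_abs, abs_of_pos (htpos n)]
      _ < ε := hn
  have hDc : ContinuousOn D (Metric.ball x₁ r) :=
    hGun.continuousOn (Eventually.of_forall fun n => (hGd n).continuousOn).frequently
  have hDcx : ContinuousAt D x₁ :=
    hDc.continuousAt (Metric.isOpen_ball.mem_nhds (Metric.mem_ball_self hr))
  -- assemble the derivative
  have hQ0x : DifferentiableAt ℂ Q0 x₁ :=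
    hQ0d.differentiableAt (Metric.isOpen_ball.mem_nhds (Metric.mem_ball_self hr))
  set B : ℂ →L[ℂ] ℂ := fderiv ℂ Q0 x₁ with hB_def
  have hB : HasFDerivAt Q0 B x₁ := hQ0x.hasFDerivAt
  set L : ℂ × ℂ →L[ℂ] ℂ :=
    (ContinuousLinearMap.fst ℂ ℂ ℂ).smulRight (D x₁) +
      B.comp (ContinuousLinearMap.snd ℂ ℂ ℂ) with hL_def
  refine DifferentiableAt.differentiableWithinAt (f := fun p : ℂ × ℂ => Qext E p.1 p.2) ?_
  refine HasFDerivAt.differentiableAt (f' := L) ?_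
  rw [hasFDerivAt_iff_isLittleO]
  have hT1 : (fun p : ℂ × ℂ => Q0 p.2 - Q0 x₁ - B (p.2 - x₁))
      =o[𝓝 ((0:ℂ), x₁)] fun p : ℂ × ℂ => p - ((0:ℂ), x₁) := by
    have h1 := hB.isLittleO
    have h2 : Tendsto (fun p : ℂ × ℂ => p.2) (𝓝 ((0:ℂ), x₁)) (𝓝 x₁) := by
      simpa using continuous_snd.tendsto ((0:ℂ), x₁)
    have h3 := h1.comp_tendsto h2
    refine h3.trans_isBigO ?_
    refine Asymptotics.IsBigO.of_bound 1 ?_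
    filter_upwards with p
    rw [one_mul]
    simpa using norm_snd_le (p - ((0:ℂ), x₁))
  
  have hT2 : (fun p : ℂ × ℂ => p.1 * (D p.2 - D x₁))
      =o[𝓝 ((0:ℂ), x₁)] fun p : ℂ × ℂ => p - ((0:ℂ), x₁) := by
    rw [Asymptotics.isLittleO_iff]
    intro c hc
    have h2 : Tendsto (fun p : ℂ × ℂ => p.2) (𝓝 ((0:ℂ), x₁)) (𝓝 x₁) := by
      simpa using continuous_snd.tendsto ((0:ℂ), x₁)
    have hev : ∀ᶠ p : ℂ × ℂ in 𝓝 ((0:ℂ), x₁), ‖D p.2 - D x₁‖ ≤ c := by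
      have : ∀ᶠ y in 𝓝 x₁, ‖D y - D x₁‖ ≤ c := by
        have := hDcx.tendsto
        have h3 : ∀ᶠ y in 𝓝 x₁, dist (D y) (D x₁) < c := this (Metric.ball_mem_nhds _ hc)
        filter_upwards [h3] with y hy
        rw [dist_eq_norm] at hy
        exact hy.le
      exact h2.eventually this
    filter_upwards [hev] with p hp2
    rw [norm_mul]
    have h4 : ‖p.1‖ ≤ ‖p - ((0:ℂ), x₁)‖ := by
      simpa using norm_fst_le (p - ((0:ℂ), x₁))
    calc ‖p.1‖ * ‖D p.2 - D x₁‖ ≤ ‖p - ((0:ℂ), x₁)‖ * c :=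
          mul_le_mul h4 hp2 (norm_nonneg _) (norm_nonneg _)
      _ = c * ‖p - ((0:ℂ), x₁)‖ := by ring
  have hT3 : (fun p : ℂ × ℂ => p.1 * (dslope (f p.2) 0 p.1 - D p.2))
      =o[𝓝 ((0:ℂ), x₁)] fun p : ℂ × ℂ => p - ((0:ℂ), x₁) := by
    rw [Asymptotics.isLittleO_iff]
    intro c hc
    have hnb : Metric.ball ((0:ℂ), x₁) (min r (c / C₂)) ∈ 𝓝 ((0:ℂ), x₁) :=
      Metric.ball_mem_nhds _ (lt_min hr (by positivity))
    filter_upwards [hnb] with p hp3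
    rw [Metric.mem_ball, Prod.dist_eq, max_lt_iff] at hp3
    obtain ⟨hp31, hp32⟩ := hp3
    have hp1R : p.1 ∈ Metric.ball (0:ℂ) R := by
      rw [Metric.mem_ball]
      exact lt_of_lt_of_le hp31 (le_trans (min_le_left _ _) hrR.le)
    have hp2cb : p.2 ∈ Metric.closedBall x₁ r :=
      Metric.ball_subset_closedBall (Metric.mem_ball.mpr
        (lt_of_lt_of_le hp32 (min_le_left _ _)))
    have hl := hlip p.2 hp2cb p.1 hp1R
    rw [norm_mul]
    have h5 : ‖p.1‖ ≤ ‖p - ((0:ℂ), x₁)‖ := by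
      simpa using norm_fst_le (p - ((0:ℂ), x₁))
    have h6 : ‖p.1‖ ≤ c / C₂ := by
      have := lt_of_lt_of_le hp31 (min_le_right _ _)
      rw [dist_eq_norm, sub_zero] at this
      · exact this.le
    calc ‖p.1‖ * ‖dslope (f p.2) 0 p.1 - D p.2‖
        ≤ ‖p.1‖ * (C₂ * ‖p.1‖) := mul_le_mul_of_nonneg_left hl (norm_nonneg _)
      _ = (C₂ * ‖p.1‖) * ‖p.1‖ := by ring
      _ ≤ (C₂ * (c / C₂)) * ‖p - ((0:ℂ), x₁)‖ := by
          refine mul_le_mul ?_ h5 (norm_nonneg _) (by positivity)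
          exact mul_le_mul_of_nonneg_left h6 hC₂.le
      _ = c * ‖p - ((0:ℂ), x₁)‖ := by
          rw [mul_div_cancel₀ _ hC₂.ne']
  have hsum := (hT1.add hT2).add hT3
  refine hsum.congr' ?_ (EventuallyEq.refl _ _)
  filter_upwards with p
  have hk := hkey p.1 p.2
  have hLval : L (p - ((0:ℂ), x₁)) = (p.1 - 0) * D x₁ + B (p.2 - x₁) := by
    simp [hL_def, ContinuousLinearMap.smulRight_apply, smul_eq_mul]
  have hQp0 : Qext E (0:ℂ) x₁ = Q0 x₁ := rfl
  show Q0 p.2 - Q0 x₁ - B (p.2 - x₁) + p.1 * (D p.2 - D x₁)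
      + p.1 * (dslope (f p.2) 0 p.1 - D p.2)
      = Qext E p.1 p.2 - Qext E 0 x₁ - L (p - ((0:ℂ), x₁))
  rw [hk, hLval, hQp0]
  show Q0 p.2 - Q0 x₁ - B (p.2 - x₁) + p.1 * (D p.2 - D x₁)
      + p.1 * (dslope (f p.2) 0 p.1 - D p.2)
      = Q0 p.2 + p.1 * dslope (f p.2) 0 p.1 - Q0 x₁ - ((p.1 - 0) * D x₁ + B (p.2 - x₁))
  ring

theorem isOpen_Dset (O₀ : Set ℂ) (hO₀ : IsOpen O₀) (d a : ℝ) : IsOpen (Dset O₀ d a) := by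
  rw [isOpen_iff_forall_mem_open]
  rintro ⟨t, x⟩ ⟨s, hs, ht, hx⟩
  have habs : Continuous fun q : ℂ × ℂ => ‖q.1‖ :=
    continuous_norm.comp continuous_fst
  rcases hx with hx | hx
  · refine ⟨{q : ℂ × ℂ | ‖q.1‖ < a * (1 - s)} ∩ Prod.snd ⁻¹' O₀, ?_, ?_, ht, hx⟩
    · rintro ⟨t', x'⟩ ⟨ht', hx'⟩
      exact ⟨s, hs, ht', Or.inl hx'⟩
    · exact (isOpen_lt habs continuous_const).inter (hO₀.preimage continuous_snd)
  · refine ⟨{q : ℂ × ℂ | ‖q.1‖ < a * (1 - s)} ∩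
      Prod.snd ⁻¹' {y : ℂ | Metric.infDist y O₀ < s * d}, ?_, ?_, ht, hx⟩
    · rintro ⟨t', x'⟩ ⟨ht', hx'⟩
      exact ⟨s, hs, ht', Or.inr hx'⟩
    · refine (isOpen_lt habs continuous_const).inter ?_
      refine IsOpen.preimage continuous_snd ?_
      exact isOpen_lt (Metric.continuous_infDist_pt O₀) continuous_const

theorem abs_fst_lt (O₀ : Set ℂ) (d a : ℝ) (ha : 0 < a) {p : ℂ × ℂ} (hp : p ∈ Dset O₀ d a) :
    ‖p.1‖ < a := by
  obtain ⟨s, hs, ht, -⟩ := hp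
  refine lt_of_lt_of_le ht ?_
  calc a * (1 - s) ≤ a * 1 := mul_le_mul_of_nonneg_left (by linarith [hs.1]) ha.le
    _ = a := mul_one a

end Aux

/-- **Lemma 1.** If `a < min{1/6, 1/(6K)}` and `U ∈ B^K_a`, then there is a
holomorphic `g : D_a → ℂ` with `|g| ≤ 6K` and `U·(−2/t + g) = 1` off `{t = 0}`. -/
theorem lemma1_reciprocal_extension (O₀ : Set ℂ) (hO₀ : IsOpen O₀) (h0 : (0 : ℂ) ∈ O₀)
    (d : ℝ) (hd : 0 < d) (a K : ℝ) (ha : 0 < a) (hK : 0 < K)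
    (haK : a < min (1 / 6) (1 / (6 * K)))
    (U : ℂ → ℂ → ℂ) (hU : memB O₀ d a K U) :
    ∃ g : ℂ → ℂ → ℂ,
      DifferentiableOn ℂ (fun p : ℂ × ℂ => g p.1 p.2) (Dset O₀ d a) ∧
      (∀ p ∈ Dset O₀ d a, ‖g p.1 p.2‖ ≤ 6 * K) ∧
      (∀ p ∈ Dset O₀ d a, p.1 ≠ 0 → U p.1 p.2 * (-2 / p.1 + g p.1 p.2) = 1) := by
  set S := Dset O₀ d a with hS_def
  have hSopen : IsOpen S := isOpen_Dset O₀ hO₀ d a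
  set E : ℂ → ℂ → ℂ := fun t x => U t x + t / 2 with hE_def
  have hfst1 : DifferentiableOn ℂ (fun p : ℂ × ℂ => p.1) S :=
    differentiable_fst.differentiableOn
  have hfst2 : DifferentiableOn ℂ (fun p : ℂ × ℂ => p.1 / 2) S := by
    fun_prop
  have hEd : DifferentiableOn ℂ (fun p : ℂ × ℂ => E p.1 p.2) S := hU.1.add hfst2
  have hEb : ∀ p ∈ S, ‖E p.1 p.2‖ ≤ K * ‖p.1‖ ^ 2 := by
    intro p hp
    have := hU.2 p hp
    simpa [hE_def] using this
  obtain ⟨hQd, hQb, hQf⟩ := Qext_main hSopen hEd hK.le hEb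
  set Q : ℂ → ℂ → ℂ := Qext E with hQ_def
  -- a * K < 1/6
  have haK2 : a * K < 1 / 6 := by
    have h2 : a < 1 / (6 * K) := lt_of_lt_of_le haK (min_le_right _ _)
    rw [lt_div_iff₀ (by positivity)] at h2
    nlinarith
  -- the denominator is bounded below
  have hden : ∀ p ∈ S, (2:ℝ) / 3 ≤ ‖1 - 2 * p.1 * Q p.1 p.2‖ := by
    intro p hp
    have h1 : ‖2 * p.1 * Q p.1 p.2‖ ≤ 1 / 3 := by
      rw [norm_mul, norm_mul]
      have h2 : ‖p.1‖ ≤ a := by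
        have := abs_fst_lt O₀ d a ha hp
        exact this.le
      calc ‖(2:ℂ)‖ * ‖p.1‖ * ‖Q p.1 p.2‖ = 2 * (‖p.1‖ * ‖Q p.1 p.2‖) := by
            rw [Complex.norm_ofNat]; ring
        _ ≤ 2 * (a * K) := by
            refine mul_le_mul_of_nonneg_left ?_ (by norm_num)
            exact mul_le_mul h2 (hQb p hp) (norm_nonneg _) ha.le
        _ ≤ 1 / 3 := by linarith
    calc (2:ℝ) / 3 = 1 - 1 / 3 := by norm_num
      _ ≤ 1 - ‖2 * p.1 * Q p.1 p.2‖ := by linarith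
      _ ≤ ‖(1:ℂ)‖ - ‖2 * p.1 * Q p.1 p.2‖ := by rw [norm_one]
      _ ≤ ‖1 - 2 * p.1 * Q p.1 p.2‖ := norm_sub_norm_le _ _
  have hden0 : ∀ p ∈ S, (1 : ℂ) - 2 * p.1 * Q p.1 p.2 ≠ 0 := by
    intro p hp
    intro h
    have := hden p hp
    rw [h, norm_zero] at this
    linarith
  refine ⟨fun t x => -4 * Q t x * (1 - 2 * t * Q t x)⁻¹, ?_, ?_, ?_⟩
  · refine DifferentiableOn.mul (hQd.const_mul (-4)) ?_
    refine DifferentiableOn.inv ?_ hden0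
    have hmul : DifferentiableOn ℂ (fun p : ℂ × ℂ => 2 * p.1) S := by
      exact hfst1.const_mul (2:ℂ)
    exact (differentiableOn_const 1).sub (hmul.mul hQd)
  · intro p hp
    rw [norm_mul, norm_inv]
    have hnum : ‖-4 * Q p.1 p.2‖ ≤ 4 * K := by
      rw [norm_mul]
      have : ‖(-4 : ℂ)‖ = 4 := by norm_num
      rw [this]
      linarith [hQb p hp]
    have hinv : ‖1 - 2 * p.1 * Q p.1 p.2‖⁻¹ ≤ 3 / 2 := by
      have h23 : (0:ℝ) < 2 / 3 := by norm_num
      calc ‖1 - 2 * p.1 * Q p.1 p.2‖⁻¹ ≤ ((2:ℝ) / 3)⁻¹ :=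
            inv_anti₀ h23 (hden p hp)
        _ = 3 / 2 := by norm_num
    calc ‖-4 * Q p.1 p.2‖ * ‖1 - 2 * p.1 * Q p.1 p.2‖⁻¹ ≤ (4 * K) * (3 / 2) := by
          refine mul_le_mul hnum hinv (by positivity) (by positivity)
      _ = 6 * K := by ring
  · intro p hp hne
    have hUeq : U p.1 p.2 = p.1 ^ 2 * Q p.1 p.2 - p.1 / 2 := by
      have := hQf p hp
      rw [hE_def] at this
      simp only at this
      linear_combination this
    rw [hUeq]
    have hd0 := hden0 p hp
    field_simp
    have hd1 : (1 - p.1 * Q p.1 p.2 * 2) ≠ 0 := by convert hd0 using 1; ring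
    linear_combination (4 * p.1 * Q p.1 p.2) * (mul_inv_cancel₀ hd1)
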